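/- Exact LP inference over all inputs: with W_i^{(z)} (i = 1, …, k−1) having nonnegative entries and f(y) the ReLU network value defined by ẑ_1 = max(0, W_0^{(y)} y + b_0), ẑ_{i+1} = max(0, W_i^{(z)} ẑ_i + W_i^{(y)} y + b_i) for i = 1, …, k−2 and f(y) = W_{k−1}^{(z)} ẑ_{k−1} + W_{k−1}^{(y)} y + b_{k−1}, the infimum of z_k over all (y, z_1, …, z_k) satisfying z_{i+1} ≥ W_i^{(z)} z_i + W_i^{(y)} y + b_i for i = 0, …, k−1 (with z_0 = 0) and z_i ≥ 0 for i = 1, …, k−1 equals the infimum of f(y) over y ∈ ℝ^p. -/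
import Mathlib


/-- Exact LP inference over all inputs.  We write the number of layers as
`k = m + 1` (final linear layer index `k - 1 = m`).  With the `Wᵢ⁽ᶻ⁾` (for `1 ≤ i ≤ k - 1`)
having nonnegative entries and `f(y)` the ReLU network value defined by `ẑ₀ = 0`,
`ẑ_{i+1}(y) = max(0, Wᵢ⁽ᶻ⁾ ẑᵢ(y) + Wᵢ⁽ʸ⁾ y + bᵢ)`, and
`f(y) = W_m⁽ᶻ⁾ ẑ_m(y) + W_m⁽ʸ⁾ y + b_m`, the infimum of `z_k` over all `(y, z₁, …, z_k)`
with `z_{i+1} ≥ Wᵢ⁽ᶻ⁾ zᵢ + Wᵢ⁽ʸ⁾ y + bᵢ` for `i = 0, …, k - 1` (with `z₀ = 0`) and `zᵢ ≥ 0`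
for `i = 1, …, k - 1` equals the infimum of `f(y)` over `y ∈ ℝᵖ`. -/
theorem icnn_lp_inference_global
    (m p : ℕ)
    (d : ℕ → ℕ) (hdk : d (m + 1) = 1)
    (Wz : (i : ℕ) → Matrix (Fin (d (i + 1))) (Fin (d i)) ℝ)
    (Wy : (i : ℕ) → Matrix (Fin (d (i + 1))) (Fin p) ℝ)
    (b : (i : ℕ) → Fin (d (i + 1)) → ℝ)
    (hW : ∀ i, 1 ≤ i → i ≤ m → ∀ r c, 0 ≤ Wz i r c)
    (zhat : (i : ℕ) → (Fin p → ℝ) → Fin (d i) → ℝ)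
    (hzhat0 : ∀ y, zhat 0 y = 0)
    (hzhatrec : ∀ i y, zhat (i + 1) y = fun j =>
      max 0 ((Wz i).mulVec (zhat i y) j + (Wy i).mulVec y j + b i j))
    (f : (Fin p → ℝ) → ℝ)
    (hf : ∀ y, f y = (Wz m).mulVec (zhat m y) ⟨0, by omega⟩
      + (Wy m).mulVec y ⟨0, by omega⟩ + b m ⟨0, by omega⟩) :
    sInf {c : ℝ | ∃ (y : Fin p → ℝ) (z : (i : ℕ) → Fin (d i) → ℝ),
        z 0 = 0 ∧
        (∀ i ≤ m, ∀ j, (Wz i).mulVec (z i) j + (Wy i).mulVec y j + b i j ≤ z (i + 1) j) ∧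
        (∀ i, 1 ≤ i → i ≤ m → ∀ j, 0 ≤ z i j) ∧
        c = z (m + 1) ⟨0, by omega⟩} =
      sInf {c : ℝ | ∃ y : Fin p → ℝ, c = f y} := by
  set A := {c : ℝ | ∃ (y : Fin p → ℝ) (z : (i : ℕ) → Fin (d i) → ℝ),
        z 0 = 0 ∧
        (∀ i ≤ m, ∀ j, (Wz i).mulVec (z i) j + (Wy i).mulVec y j + b i j ≤ z (i + 1) j) ∧
        (∀ i, 1 ≤ i → i ≤ m → ∀ j, 0 ≤ z i j) ∧
        c = z (m + 1) ⟨0, by omega⟩} with hA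
  set B := {c : ℝ | ∃ y : Fin p → ℝ, c = f y} with hB
  -- B ⊆ A
  have hBA : B ⊆ A := by
    rintro c ⟨y, rfl⟩
    refine ⟨y, fun i => if h : i ≤ m then zhat i y else fun j => f y, ?_, ?_, ?_, ?_⟩
    · simp [hzhat0]
    · intro i hi j
      simp only [dif_pos hi]
      by_cases hi1 : i + 1 ≤ m
      · simp only [dif_pos hi1, hzhatrec i y]
        exact le_max_right _ _
      · have : i = m := by omega
        subst this
        simp only [dif_neg hi1]
        have : j = ⟨0, by omega⟩ := by
          apply Fin.ext; have := j.isLt; omega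
        rw [this, hf y]
    · intro i h1 hi j
      simp only [dif_pos hi]
      induction i with
      | zero => omega
      | succ n _ => rw [hzhatrec n y]; exact le_max_left _ _
    · simp only [dif_neg (by omega : ¬ m + 1 ≤ m)]
  -- every element of A is ≥ some element of B
  have hdom : ∀ c ∈ A, ∃ c' ∈ B, c' ≤ c := by
    rintro c ⟨y, z, hz0, hrec, hnn, rfl⟩
    refine ⟨f y, ⟨y, rfl⟩, ?_⟩
    have key : ∀ i, i ≤ m → ∀ j, zhat i y j ≤ z i j := by
      intro i
      induction i with
      | zero => intro _ j; rw [hzhat0, hz0]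
      | succ n ih =>
        intro hn j
        have hmono : (Wz n).mulVec (zhat n y) j ≤ (Wz n).mulVec (z n) j := by
          rcases Nat.eq_zero_or_pos n with h0 | hpos
          · subst h0; rw [hzhat0, hz0]
          · unfold Matrix.mulVec dotProduct
            apply Finset.sum_le_sum
            intro c _
            exact mul_le_mul_of_nonneg_left (ih (by omega) c)
              (hW n hpos (by omega) j c)
        rw [hzhatrec n y]
        refine max_le (hnn (n+1) (by omega) hn j) ?_
        calc (Wz n).mulVec (zhat n y) j + (Wy n).mulVec y j + b n j
            ≤ (Wz n).mulVec (z n) j + (Wy n).mulVec y j + b n j := by linarith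
          _ ≤ z (n+1) j := hrec n (by omega) j
    have hmono : (Wz m).mulVec (zhat m y) ⟨0, by omega⟩ ≤ (Wz m).mulVec (z m) ⟨0, by omega⟩ := by
      rcases Nat.eq_zero_or_pos m with h0 | hpos
      · subst h0; rw [hzhat0, hz0]
      · unfold Matrix.mulVec dotProduct
        apply Finset.sum_le_sum
        intro c _
        exact mul_le_mul_of_nonneg_left (key m le_rfl c)
          (hW m hpos le_rfl _ c)
    rw [hf y]
    calc (Wz m).mulVec (zhat m y) ⟨0, by omega⟩ + (Wy m).mulVec y ⟨0, by omega⟩ + b m ⟨0, by omega⟩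
        ≤ (Wz m).mulVec (z m) ⟨0, by omega⟩ + (Wy m).mulVec y ⟨0, by omega⟩ + b m ⟨0, by omega⟩ := by
          linarith
      _ ≤ z (m+1) ⟨0, by omega⟩ := hrec m le_rfl _
  have hBne : B.Nonempty := ⟨f 0, 0, rfl⟩
  have hAne : A.Nonempty := hBne.mono hBA
  by_cases hbdd : BddBelow B
  · have hAbdd : BddBelow A := by
      obtain ⟨L, hL⟩ := hbdd
      refine ⟨L, fun c hc => ?_⟩
      obtain ⟨c', hc', hle⟩ := hdom c hc
      exact (hL hc').trans hle
    apply le_antisymm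
    · exact csInf_le_csInf hAbdd hBne hBA
    · apply le_csInf hAne
      intro c hc
      obtain ⟨c', hc', hle⟩ := hdom c hc
      exact (csInf_le hbdd hc').trans hle
  · have hAbdd : ¬ BddBelow A := fun h => hbdd (h.mono hBA)
    rw [Real.sInf_of_not_bddBelow hAbdd, Real.sInf_of_not_bddBelow hbdd]
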